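/- For complex parameters a, b, c, e with c and e+1 not nonpositive integers, and complex σ, ρ with |σ| < 1, the following identity of formal power series (convergent double series) holds: Ξ₂(a,b;c;σ,ρ) − Ξ₁₀[a,b;e | c; e+1; σ,ρ] = (ρ/((e+1)c)) · Ξ₁₀[a,b; e+1 | c+1; e+2; σ,ρ], where Ξ₂(a,b;c;σ,ρ) = Σ_{m,k≥0} ((a)_m (b)_m)/(m! k! (c)_{m+k}) σ^m ρ^k and Ξ₁₀[a,b;a' | c; c'; σ,ρ] = Σ_{m,k≥0} ((a)_m (b)_m (a')_k)/(m! k! (c)_{m+k} (c')_k) σ^m ρ^k. -/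

import Mathlib

open Complex

/-- Pochhammer symbol `(a)_n = a(a+1)⋯(a+n-1)` for complex `a`. -/
noncomputable def poch (a : ℂ) (n : ℕ) : ℂ := (ascPochhammer ℂ n).eval a

/-- `c` is not a nonpositive integer `0, -1, -2, …`. -/
def notNonposInt (c : ℂ) : Prop := ∀ n : ℕ, c ≠ -(n : ℂ)

/-- Confluent hypergeometric series `Ξ₂(a,b;c;σ,ρ)`. -/
noncomputable def Xi2 (a b c σ ρ : ℂ) : ℂ :=
  ∑' mk : ℕ × ℕ, poch a mk.1 * poch b mk.1 /
    ((mk.1.factorial : ℂ) * (mk.2.factorial : ℂ) * poch c (mk.1 + mk.2)) * σ ^ mk.1 * ρ ^ mk.2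

/-- Series `Ξ₁₀[a,b;a' | c; c'; σ,ρ]`. -/
noncomputable def Xi10 (a b a' c c' σ ρ : ℂ) : ℂ :=
  ∑' mk : ℕ × ℕ, poch a mk.1 * poch b mk.1 * poch a' mk.2 /
    ((mk.1.factorial : ℂ) * (mk.2.factorial : ℂ) * poch c (mk.1 + mk.2) * poch c' mk.2) *
    σ ^ mk.1 * ρ ^ mk.2

/-- Triple hypergeometric series `Φ[a,b,c,d;e;σ,ω,ρ]`. -/
noncomputable def Phi3 (a b c d e σ ω ρ : ℂ) : ℂ :=
  ∑' t : ℕ × ℕ × ℕ, poch a t.1 * poch b t.2.1 * poch c t.1 * poch d t.2.1 /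
    ((t.1.factorial : ℂ) * (t.2.1.factorial : ℂ) * (t.2.2.factorial : ℂ) *
      poch e (t.1 + t.2.1 + t.2.2)) *
    σ ^ t.1 * ω ^ t.2.1 * ρ ^ t.2.2

/-- Gauss hypergeometric series `F(a,b;c;θ)`. -/
noncomputable def GaussF (a b c θ : ℂ) : ℂ :=
  ∑' n : ℕ, poch a n * poch b n / ((n.factorial : ℂ) * poch c n) * θ ^ n

/-- Series `Ξ_{pq}[a,b;a',b' | c; c',d'; σ,ρ]`, `p, q ∈ {0,1}`. -/
noncomputable def XiPQ (p q : ℕ) (a b a' b' c c' d' σ ρ : ℂ) : ℂ :=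
  ∑' mk : ℕ × ℕ, poch a mk.1 * poch b mk.1 * poch a' (p * mk.2) * poch b' (q * (mk.1 + mk.2)) /
    ((mk.1.factorial : ℂ) * (mk.2.factorial : ℂ) * poch c (mk.1 + mk.2) *
      poch c' (p * mk.2) * poch d' (q * (mk.1 + mk.2))) *
    σ ^ mk.1 * ρ ^ mk.2

/-- Series `Ψ_{pq}[a,b,c,d;a',b' | e; c',d'; σ,θ,ρ]`, `p, q ∈ {0,1}`. -/
noncomputable def PsiPQ (p q : ℕ) (a b c d a' b' e c' d' σ θ ρ : ℂ) : ℂ :=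
  ∑' mk : ℕ × ℕ, poch a mk.1 * poch c mk.1 * poch a' (p * mk.2) * poch b' (q * (mk.1 + mk.2)) /
    ((mk.1.factorial : ℂ) * (mk.2.factorial : ℂ) * poch e (mk.1 + mk.2) *
      poch c' (p * mk.2) * poch d' (q * (mk.1 + mk.2))) *
    GaussF b (e - d + (mk.1 : ℂ) + (mk.2 : ℂ)) (e + (mk.1 : ℂ) + (mk.2 : ℂ)) θ *
    σ ^ mk.1 * ρ ^ mk.2


section XiAux

lemma poch_zero' (a : ℂ) : poch a 0 = 1 := by simp [poch]

lemma poch_succ (a : ℂ) (n : ℕ) : poch a (n + 1) = poch a n * (a + n) := by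
  simp [poch, ascPochhammer_succ_eval]

lemma poch_succ_left (a : ℂ) (n : ℕ) : poch a (n + 1) = a * poch (a + 1) n := by
  simp [poch, ascPochhammer_succ_left, Polynomial.eval_comp]

lemma notNonposInt.succ {c : ℂ} (hc : notNonposInt c) : notNonposInt (c + 1) := by
  intro n h
  apply hc (n + 1)
  push_cast
  linear_combination h

lemma notNonposInt.add_ne {c : ℂ} (hc : notNonposInt c) (n : ℕ) : c + n ≠ 0 := by
  intro h
  exact hc n (by linear_combination h)

lemma poch_ne_zero {c : ℂ} (hc : notNonposInt c) (n : ℕ) : poch c n ≠ 0 := by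
  induction n with
  | zero => simp [poch_zero']
  | succ n ih => rw [poch_succ]; exact mul_ne_zero ih (hc.add_ne n)

/-- Lower bound: `δ (n-N)! ≤ ‖(c)_n‖`. -/
lemma poch_norm_lower {c : ℂ} (hc : notNonposInt c) :
    ∃ N : ℕ, ∃ δ : ℝ, 0 < δ ∧ ∀ n, δ * ((n - N).factorial : ℝ) ≤ ‖poch c n‖ := by
  set N : ℕ := ⌈‖c‖⌉₊ + 1 with hN
  have hNc : ‖c‖ ≤ (N : ℝ) - 1 := by
    have := Nat.le_ceil ‖c‖
    push_cast [hN]; push_cast at this ⊢; linarith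
  obtain ⟨n₀, -, hn₀⟩ := (Finset.range (N + 1)).exists_min_image (fun n => ‖poch c n‖)
    ⟨0, Finset.mem_range.mpr (Nat.succ_pos N)⟩
  set δ : ℝ := ‖poch c n₀‖ with hδ
  refine ⟨N, δ, norm_pos_iff.mpr (poch_ne_zero hc n₀), ?_⟩
  have hsmall : ∀ n ≤ N, δ ≤ ‖poch c n‖ := fun n hn =>
    hn₀ n (Finset.mem_range.mpr (Nat.lt_succ_of_le hn))
  intro n
  induction n with
  | zero => simpa using hsmall 0 (Nat.zero_le N)
  | succ n ih =>
    rcases le_or_gt (n + 1) N with h | h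
    · simpa [Nat.sub_eq_zero_of_le h] using hsmall (n + 1) h
    · have hnN : N ≤ n := Nat.lt_succ_iff.mp h
      rw [poch_succ, norm_mul]
      have h1 : (↑(n - N) : ℝ) + 1 ≤ ‖c + n‖ := by
        have h0 : (n : ℝ) - ‖c‖ ≤ ‖c + n‖ := by
          have h' := norm_sub_norm_le ((n:ℂ)) (-c)
          simp only [sub_neg_eq_add] at h'
          have h2' : ‖(n:ℂ)‖ = (n:ℝ) := by simp
          have h3' : ‖(n:ℂ) + c‖ = ‖c + n‖ := by rw [add_comm]
          have h4' : ‖-c‖ = ‖c‖ := norm_neg c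
          linarith
        have hcast : ((n - N : ℕ) : ℝ) = (n:ℝ) - N := by
          rw [Nat.cast_sub hnN]
        rw [hcast]
        linarith
      have h2 : (n + 1 - N) = (n - N) + 1 := by omega
      rw [h2, Nat.factorial_succ]
      push_cast
      calc δ * (((n - N : ℕ) + 1 : ℝ) * ((n - N).factorial : ℝ))
          = (δ * ((n - N).factorial : ℝ)) * (((n - N : ℕ) : ℝ) + 1) := by ring
        _ ≤ ‖poch c n‖ * ‖c + n‖ := by
            apply mul_le_mul ih h1 (by positivity) (norm_nonneg _)

/-- Upper bound via ascFactorial. -/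
lemma poch_norm_le_ascFactorial (a : ℂ) (A : ℕ) (hA : ‖a‖ ≤ A + 1) (m : ℕ) :
    ‖poch a m‖ ≤ ((A + 1).ascFactorial m : ℝ) := by
  induction m with
  | zero => simp [poch_zero']
  | succ m ih =>
    rw [poch_succ, norm_mul, Nat.ascFactorial_succ]
    push_cast
    have h1 : ‖a + m‖ ≤ (A : ℝ) + 1 + m := by
      calc ‖a + m‖ ≤ ‖a‖ + ‖(m:ℂ)‖ := norm_add_le _ _
        _ = ‖a‖ + m := by simp
        _ ≤ (A:ℝ) + 1 + m := by linarith
    calc ‖poch a m‖ * ‖a + m‖ ≤ ((A+1).ascFactorial m : ℝ) * ((A:ℝ) + 1 + m) :=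
          mul_le_mul ih h1 (norm_nonneg _) (by positivity)
      _ = ((A:ℝ) + 1 + m) * ((A+1).ascFactorial m : ℝ) := by ring

lemma poch_norm_upper (a : ℂ) (m : ℕ) :
    ‖poch a m‖ ≤ (m.factorial : ℝ) * ((⌈‖a‖⌉₊ + m : ℕ) : ℝ) ^ (⌈‖a‖⌉₊) := by
  set A := ⌈‖a‖⌉₊
  have h1 := poch_norm_le_ascFactorial a A (by linarith [Nat.le_ceil ‖a‖]) m
  have h2 : (A + 1).ascFactorial m = m.factorial * (A + m).choose m :=
    Nat.ascFactorial_eq_factorial_mul_choose A m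
  have h3 : (A + m).choose m = (A + m).choose A := by
    rw [← Nat.choose_symm (Nat.le_add_left m A)]
    congr 1; omega
  have h4 : (A + m).choose A ≤ (A + m) ^ A := Nat.choose_le_pow (A + m) A
  calc ‖poch a m‖ ≤ ((A + 1).ascFactorial m : ℝ) := h1
    _ = (m.factorial : ℝ) * ((A + m).choose A : ℝ) := by rw [h2, h3]; push_cast; ring
    _ ≤ (m.factorial : ℝ) * ((A + m : ℕ) : ℝ) ^ A := by
        have h5 : ((A + m).choose A : ℝ) ≤ ((A + m : ℕ) : ℝ) ^ A := by
          exact_mod_cast h4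
        have h6 : (0:ℝ) ≤ (m.factorial : ℝ) := by positivity
        exact mul_le_mul_of_nonneg_left h5 h6

lemma factorial_le_sub_mul (m N : ℕ) :
    (m.factorial : ℝ) ≤ ((m - N).factorial : ℝ) * (m + 1 : ℝ) ^ N := by
  induction N with
  | zero => simp
  | succ N ih =>
    have h1 : (m - N).factorial ≤ (m - (N+1)).factorial * (m + 1) := by
      have h2 : m - N ≤ (m - (N+1)) + 1 := by omega
      calc (m - N).factorial ≤ ((m - (N+1)) + 1).factorial := Nat.factorial_le h2
        _ = (m - (N+1)).factorial * ((m - (N+1)) + 1) := by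
            rw [Nat.factorial_succ]; ring
        _ ≤ (m - (N+1)).factorial * (m + 1) := by
            apply Nat.mul_le_mul_left; omega
    have h1' : ((m - N).factorial : ℝ) ≤ ((m - (N+1)).factorial : ℝ) * (m + 1) := by
      exact_mod_cast h1
    calc (m.factorial : ℝ) ≤ ((m - N).factorial : ℝ) * (m + 1) ^ N := ih
      _ ≤ ((m - (N+1)).factorial : ℝ) * (m + 1) * (m + 1) ^ N := by
          apply mul_le_mul_of_nonneg_right h1' (by positivity)
      _ = ((m - (N+1)).factorial : ℝ) * (m + 1) ^ (N + 1) := by ring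

/-- Summability of `(m+1)^d s^m`, `0 < s < 1`. -/
lemma summable_poly_geom {s : ℝ} (hs0 : 0 < s) (hs1 : s < 1) (d : ℕ) :
    Summable (fun m : ℕ => (m + 1 : ℝ) ^ d * s ^ m) := by
  have h := summable_pow_mul_geometric_of_norm_lt_one (R := ℝ) d (r := s)
    (by rwa [Real.norm_eq_abs, abs_of_pos hs0])
  have h2 : Summable (fun m : ℕ => ((m + 1 : ℕ) : ℝ) ^ d * s ^ (m + 1)) :=
    (summable_nat_add_iff 1).mpr h
  have h3 : Summable (fun m : ℕ => s⁻¹ * (((m + 1 : ℕ) : ℝ) ^ d * s ^ (m + 1))) :=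
    h2.mul_left _
  convert h3 using 2 with m
  push_cast
  field_simp
  ring

/-- Summability of `Q^k/(k-N)!`. -/
lemma summable_geom_div_sub_factorial (Q : ℝ) (N : ℕ) :
    Summable (fun k : ℕ => Q ^ k / ((k - N).factorial : ℝ)) := by
  rw [← summable_nat_add_iff N]
  have : ∀ k : ℕ, Q ^ (k + N) / (((k + N) - N).factorial : ℝ)
      = Q ^ N * (Q ^ k / (k.factorial : ℝ)) := by
    intro k
    rw [Nat.add_sub_cancel, pow_add]
    ring
  simp only [this]
  exact (Real.summable_pow_div_factorial Q).mul_left _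

lemma sub_factorial_mul_le (m k N : ℕ) :
    ((m - N).factorial : ℝ) * ((k - N).factorial : ℝ) ≤ (((m + k) - N).factorial : ℝ) := by
  have h1 : (m - N).factorial * (k - N).factorial ≤ ((m - N) + (k - N)).factorial :=
    Nat.le_of_dvd (Nat.factorial_pos _) (Nat.factorial_mul_factorial_dvd_factorial_add _ _)
  have h2 : ((m - N) + (k - N)).factorial ≤ ((m + k) - N).factorial :=
    Nat.factorial_le (by omega)
  exact_mod_cast h1.trans h2

set_option maxHeartbeats 1600000 in
lemma summable_xi10_aux (a b a' c c' σ ρ : ℂ)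
    (hc : notNonposInt c) (hc' : notNonposInt c') (hσ : ‖σ‖ < 1) :
    Summable (fun mk : ℕ × ℕ => poch a mk.1 * poch b mk.1 * poch a' mk.2 /
      ((mk.1.factorial : ℂ) * (mk.2.factorial : ℂ) * poch c (mk.1 + mk.2) * poch c' mk.2) *
      σ ^ mk.1 * ρ ^ mk.2) := by
  obtain ⟨N, δ, hδ, hlow⟩ := poch_norm_lower hc
  obtain ⟨N', δ', hδ', hlow'⟩ := poch_norm_lower hc'
  set s : ℝ := (‖σ‖ + 1) / 2 with hs
  have hs0 : 0 < s := by positivity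
  have hs1 : s < 1 := by rw [hs]; linarith
  have hσs : ‖σ‖ ≤ s := by rw [hs]; linarith
  set A := ⌈‖a‖⌉₊; set B := ⌈‖b‖⌉₊; set E := ⌈‖a'‖⌉₊
  set d : ℕ := A + B + N with hd
  set C₀ : ℝ := (A + 1) ^ A * (B + 1) ^ B / δ with hC₀
  set C₁ : ℝ := (E + 1 : ℝ) ^ E * 2 ^ E / δ' with hC₁
  set Q : ℝ := 2 ^ E * ‖ρ‖ with hQ
  have hu : Summable (fun m : ℕ => C₀ * ((m + 1 : ℝ) ^ d * s ^ m)) :=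
    (summable_poly_geom hs0 hs1 d).mul_left _
  have hv : Summable (fun k : ℕ => C₁ * (Q ^ k / ((k - N).factorial : ℝ))) :=
    (summable_geom_div_sub_factorial Q N).mul_left _
  have hnn1 : 0 ≤ (fun m : ℕ => C₀ * ((m + 1 : ℝ) ^ d * s ^ m)) := by
    intro m; dsimp only; positivity
  have hnn2 : 0 ≤ (fun k : ℕ => C₁ * (Q ^ k / ((k - N).factorial : ℝ))) := by
    intro k; dsimp only; positivity
  apply Summable.of_norm_bounded (g :=
    fun mk : ℕ × ℕ => (C₀ * ((mk.1 + 1 : ℝ) ^ d * s ^ mk.1)) *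
      (C₁ * (Q ^ mk.2 / ((mk.2 - N).factorial : ℝ))))
    (hu.mul_of_nonneg hv hnn1 hnn2)
  rintro ⟨m, k⟩
  simp only
  have hnorm : ‖poch a m * poch b m * poch a' k /
      ((m.factorial : ℂ) * (k.factorial : ℂ) * poch c (m + k) * poch c' k) *
      σ ^ m * ρ ^ k‖ =
      ‖poch a m‖ * ‖poch b m‖ * ‖poch a' k‖ /
      ((m.factorial : ℝ) * (k.factorial : ℝ) * ‖poch c (m + k)‖ * ‖poch c' k‖) *
      ‖σ‖ ^ m * ‖ρ‖ ^ k := by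
    simp [norm_mul, norm_div, norm_pow]
  rw [hnorm]
  have hpa := poch_norm_upper a m
  have hpb := poch_norm_upper b m
  have hpe := poch_norm_upper a' k
  push_cast at hpa hpb hpe
  have hpc : δ * (((m - N).factorial : ℝ) * ((k - N).factorial : ℝ)) ≤ ‖poch c (m + k)‖ := by
    calc δ * (((m - N).factorial : ℝ) * ((k - N).factorial : ℝ))
        ≤ δ * (((m + k) - N).factorial : ℝ) :=
          mul_le_mul_of_nonneg_left (sub_factorial_mul_le m k N) hδ.le
      _ ≤ ‖poch c (m + k)‖ := hlow (m + k)
  have hpc' : δ' ≤ ‖poch c' k‖ := by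
    calc δ' = δ' * 1 := (mul_one δ').symm
      _ ≤ δ' * ((k - N').factorial : ℝ) := by
          apply mul_le_mul_of_nonneg_left _ hδ'.le
          exact_mod_cast (k - N').factorial_pos
      _ ≤ ‖poch c' k‖ := hlow' k
  have hfm : (0:ℝ) < (m.factorial : ℝ) := by exact_mod_cast m.factorial_pos
  have hfk : (0:ℝ) < (k.factorial : ℝ) := by exact_mod_cast k.factorial_pos
  have hfmN : (0:ℝ) < ((m - N).factorial : ℝ) := by exact_mod_cast (m - N).factorial_pos
  have hfkN : (0:ℝ) < ((k - N).factorial : ℝ) := by exact_mod_cast (k - N).factorial_pos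
  calc ‖poch a m‖ * ‖poch b m‖ * ‖poch a' k‖ /
      ((m.factorial : ℝ) * (k.factorial : ℝ) * ‖poch c (m + k)‖ * ‖poch c' k‖) *
      ‖σ‖ ^ m * ‖ρ‖ ^ k
      ≤ (((m.factorial : ℝ) * ((A:ℝ) + m) ^ A) * (((m.factorial : ℝ)) * ((B:ℝ) + m) ^ B) *
          (((k.factorial : ℝ)) * ((E:ℝ) + k) ^ E)) /
        ((m.factorial : ℝ) * (k.factorial : ℝ) *
          (δ * (((m - N).factorial : ℝ) * ((k - N).factorial : ℝ))) * δ') *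
        s ^ m * ‖ρ‖ ^ k := by
        gcongr <;> first
          | positivity
          | exact hpa
          | exact hpb
          | exact hpe
          | exact hpc
          | exact hpc'
          | exact hσs
    _ = (((A:ℝ) + m) ^ A * ((B:ℝ) + m) ^ B * ((E:ℝ) + k) ^ E *
          ((m.factorial : ℝ) / ((m - N).factorial : ℝ)) / (δ * δ')) *
        s ^ m * (‖ρ‖ ^ k * (1 / ((k - N).factorial : ℝ))) := by
        field_simp
    _ ≤ (((((A:ℝ) + 1) * (m + 1)) ^ A) * ((((B:ℝ) + 1) * (m + 1)) ^ B) *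
          ((((E:ℝ) + 1) * 2 * 2 ^ k) ^ E) * ((m:ℝ) + 1) ^ N / (δ * δ')) *
        s ^ m * (‖ρ‖ ^ k * (1 / ((k - N).factorial : ℝ))) := by
        have e1 : ((A:ℝ) + m) ≤ ((A:ℝ) + 1) * (m + 1) := by
          nlinarith [Nat.cast_nonneg (α := ℝ) A, Nat.cast_nonneg (α := ℝ) m]
        have e2 : ((B:ℝ) + m) ≤ ((B:ℝ) + 1) * (m + 1) := by
          nlinarith [Nat.cast_nonneg (α := ℝ) B, Nat.cast_nonneg (α := ℝ) m]
        have e3 : ((E:ℝ) + k) ≤ ((E:ℝ) + 1) * 2 * 2 ^ k := by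
          have hk2 : (k:ℝ) + 1 ≤ 2 * 2 ^ k := by
            have h2k := Nat.lt_two_pow_self (n := k)
            have h2k' : (k:ℝ) < 2 ^ k := by exact_mod_cast h2k
            have h2k1 : (1:ℝ) ≤ 2 ^ k := by exact_mod_cast Nat.one_le_two_pow (n := k)
            linarith
          nlinarith [Nat.cast_nonneg (α := ℝ) E, Nat.cast_nonneg (α := ℝ) k,
            pow_pos (by norm_num : (0:ℝ) < 2) k]
        have e4 : (m.factorial : ℝ) / ((m - N).factorial : ℝ) ≤ ((m:ℝ) + 1) ^ N := by
          rw [div_le_iff₀ hfmN]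
          calc (m.factorial : ℝ) ≤ ((m - N).factorial : ℝ) * ((m:ℝ) + 1) ^ N :=
                factorial_le_sub_mul m N
            _ = ((m:ℝ) + 1) ^ N * ((m - N).factorial : ℝ) := by ring
        gcongr <;> first
          | positivity
          | exact e1
          | exact e2
          | exact e3
          | exact e4
    _ = (C₀ * (((m:ℝ) + 1) ^ d * s ^ m)) * (C₁ * (Q ^ k / ((k - N).factorial : ℝ))) := by
        rw [hC₀, hC₁, hQ, hd]
        rw [mul_pow, mul_pow, mul_pow, mul_pow, mul_pow]
        rw [pow_add, pow_add]
        rw [← pow_mul, ← pow_mul 2 E k, Nat.mul_comm k E]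
        field_simp

lemma aux_alg (Y P R S M K c ε κ ρ : ℂ) (hP : P ≠ 0) (hS : S ≠ 0) (hR : R ≠ 0)
    (hM : M ≠ 0) (hK : K ≠ 0) (hc : c ≠ 0) (hε : ε ≠ 0) (hκ : κ ≠ 0)
    (hrel : ε * S = R * (ε + κ - 1)) :
    Y * ρ / (M * (κ * K) * (c * P)) - Y * ρ * ((ε - 1) * R) / (M * (κ * K) * (c * P) * (ε * S))
      = ρ / (ε * c) * (Y * R / (M * K * P * S)) := by
  have hD : M * (κ * K) * (c * P) ≠ 0 :=
    mul_ne_zero (mul_ne_zero hM (mul_ne_zero hκ hK)) (mul_ne_zero hc hP)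
  have hεS : ε * S ≠ 0 := mul_ne_zero hε hS
  have hd2 : ε * c * (M * K * P * S) ≠ 0 :=
    mul_ne_zero (mul_ne_zero hε hc)
      (mul_ne_zero (mul_ne_zero (mul_ne_zero hM hK) hP) hS)
  rw [div_sub_div _ _ hD (mul_ne_zero hD hεS), div_mul_div_comm,
    div_eq_div_iff (mul_ne_zero hD (mul_ne_zero hD hεS)) hd2]
  linear_combination (Y * ρ * (M * (κ * K) * (c * P)) * (ε * c * (M * K * P * S))) * hrel

lemma termwise_step (a b c e σ ρ : ℂ) (hc : notNonposInt c) (he : notNonposInt (e + 1))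
    (m k : ℕ) :
    poch a m * poch b m / ((m.factorial : ℂ) * ((k+1).factorial : ℂ) * poch c (m + (k+1))) *
        σ ^ m * ρ ^ (k+1) -
      poch a m * poch b m * poch e (k+1) /
        ((m.factorial : ℂ) * ((k+1).factorial : ℂ) * poch c (m + (k+1)) * poch (e+1) (k+1)) *
        σ ^ m * ρ ^ (k+1) =
      ρ / ((e + 1) * c) * (poch a m * poch b m * poch (e+1) k /
        ((m.factorial : ℂ) * (k.factorial : ℂ) * poch (c+1) (m + k) * poch (e+2) k) *
        σ ^ m * ρ ^ k) := by
  have hc0 : c ≠ 0 := by have := hc 0; simpa using this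
  have he1 : e + 1 ≠ 0 := by have := he 0; simpa using this
  have h1 : poch c (m + (k+1)) = c * poch (c+1) (m+k) := poch_succ_left c (m+k)
  have h2 : poch e (k+1) = e * poch (e+1) k := poch_succ_left e k
  have h3 : poch (e+1) (k+1) = (e+1) * poch (e+2) k := by
    rw [poch_succ_left (e+1) k, show e+1+1 = e+2 by ring]
  have h4 : poch (e+1) (k+1) = poch (e+1) k * (e+1+k) := poch_succ (e+1) k
  have hrel : (e+1) * poch (e+2) k = poch (e+1) k * (e+1+k) := by rw [← h3, h4]
  have hP : poch (c+1) (m+k) ≠ 0 := poch_ne_zero hc.succ _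
  have hS : poch (e+2) k ≠ 0 := by
    have h' := poch_ne_zero he.succ k
    convert h' using 2; ring
  have hR : poch (e+1) k ≠ 0 := poch_ne_zero he k
  have hm : (m.factorial : ℂ) ≠ 0 := Nat.cast_ne_zero.mpr m.factorial_ne_zero
  have hk : (k.factorial : ℂ) ≠ 0 := Nat.cast_ne_zero.mpr k.factorial_ne_zero
  have hk1 : ((k+1 : ℕ) : ℂ) ≠ 0 := Nat.cast_ne_zero.mpr (Nat.succ_ne_zero k)
  have hrel2 : (e+1) * poch (e+2) k = poch (e+1) k * ((e+1) + ((k+1:ℕ):ℂ) - 1) := by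
    push_cast
    linear_combination hrel
  rw [h1, h2, h3, Nat.factorial_succ, Nat.cast_mul]
  linear_combination aux_alg (poch a m * poch b m * σ ^ m * ρ ^ k)
    (poch (c+1) (m+k)) (poch (e+1) k) (poch (e+2) k)
    ((m.factorial : ℂ)) ((k.factorial : ℂ)) c (e+1) (((k+1:ℕ)):ℂ) ρ
    hP hS hR hm hk hc0 he1 hk1 hrel2

end XiAux

/-- Identity (10): `Ξ₂ − Ξ₁₀ = (ρ/((e+1)c)) Ξ₁₀`. -/
theorem xi_identity_10 (a b c e σ ρ : ℂ)
    (hc : notNonposInt c) (he : notNonposInt (e + 1)) (hσ : ‖σ‖ < 1) :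
    Xi2 a b c σ ρ - Xi10 a b e c (e + 1) σ ρ =
      ρ / ((e + 1) * c) * Xi10 a b (e + 1) (c + 1) (e + 2) σ ρ := by
  classical
  have h1 : notNonposInt 1 := by
    intro n h
    have hre := congrArg Complex.re h
    simp at hre
    linarith [Nat.cast_nonneg (α := ℝ) n]
  have hf : Summable (fun mk : ℕ × ℕ => poch a mk.1 * poch b mk.1 /
      ((mk.1.factorial : ℂ) * (mk.2.factorial : ℂ) * poch c (mk.1 + mk.2)) *
      σ ^ mk.1 * ρ ^ mk.2) := by
    apply (summable_xi10_aux a b 1 c 1 σ ρ hc h1 hσ).congr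
    intro mk
    rw [mul_div_mul_right _ _ (poch_ne_zero h1 mk.2)]
  have hg : Summable (fun mk : ℕ × ℕ => poch a mk.1 * poch b mk.1 * poch e mk.2 /
      ((mk.1.factorial : ℂ) * (mk.2.factorial : ℂ) * poch c (mk.1 + mk.2) *
        poch (e + 1) mk.2) * σ ^ mk.1 * ρ ^ mk.2) :=
    summable_xi10_aux a b e c (e + 1) σ ρ hc he hσ
  rw [Xi2, Xi10, Xi10, ← hf.tsum_sub hg]
  set F : ℕ × ℕ → ℂ := fun mk => poch a mk.1 * poch b mk.1 /
      ((mk.1.factorial : ℂ) * (mk.2.factorial : ℂ) * poch c (mk.1 + mk.2)) *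
      σ ^ mk.1 * ρ ^ mk.2 -
    poch a mk.1 * poch b mk.1 * poch e mk.2 /
      ((mk.1.factorial : ℂ) * (mk.2.factorial : ℂ) * poch c (mk.1 + mk.2) *
        poch (e + 1) mk.2) * σ ^ mk.1 * ρ ^ mk.2 with hF
  have hinj : Function.Injective (fun p : ℕ × ℕ => (p.1, p.2 + 1)) := by
    intro p q h
    simp only [Prod.mk.injEq] at h
    exact Prod.ext h.1 (Nat.succ_injective h.2)
  have hzero : ∀ x ∉ Set.range (fun p : ℕ × ℕ => (p.1, p.2 + 1)), F x = 0 := by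
    rintro ⟨m, k⟩ hx
    match k with
    | 0 =>
      simp only [hF]
      simp [poch_zero']
    | k + 1 =>
      exact absurd ⟨(m, k), rfl⟩ hx
  have hstep : ∀ p : ℕ × ℕ, F (p.1, p.2 + 1) =
      ρ / ((e + 1) * c) * (poch a p.1 * poch b p.1 * poch (e + 1) p.2 /
        ((p.1.factorial : ℂ) * (p.2.factorial : ℂ) * poch (c + 1) (p.1 + p.2) *
          poch (e + 2) p.2) * σ ^ p.1 * ρ ^ p.2) := by
    rintro ⟨m, k⟩
    exact termwise_step a b c e σ ρ hc he m k
  calc ∑' mk : ℕ × ℕ, F mk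
      = ∑' p : ℕ × ℕ, F (p.1, p.2 + 1) := (hinj.tsum_eq (Function.support_subset_iff'.mpr hzero)).symm
    _ = ∑' p : ℕ × ℕ, ρ / ((e + 1) * c) * (poch a p.1 * poch b p.1 * poch (e + 1) p.2 /
        ((p.1.factorial : ℂ) * (p.2.factorial : ℂ) * poch (c + 1) (p.1 + p.2) *
          poch (e + 2) p.2) * σ ^ p.1 * ρ ^ p.2) := tsum_congr hstep
    _ = ρ / ((e + 1) * c) * ∑' p : ℕ × ℕ, (poch a p.1 * poch b p.1 * poch (e + 1) p.2 /
        ((p.1.factorial : ℂ) * (p.2.factorial : ℂ) * poch (c + 1) (p.1 + p.2) *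
          poch (e + 2) p.2) * σ ^ p.1 * ρ ^ p.2) := tsum_mul_left
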